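/- Let G be a simple graph on a finite vertex set with at least two vertices and let NM(G) = A·L be its neighbourhood matrix. Then NM(G) has no zero entries if and only if G has diameter at most 2, i.e., if and only if every pair of distinct vertices i and j is joined by a walk of length at most 2. -/

import Mathlib

/-!
Since `L = D - A`, the `(i, j)` entry of `A * L` is `[i ~ j] deg j - #(N i ∩ N j)`. When `i ~ j` it is
positive, as `i` is a neighbour of `j` but not a common neighbour of `i` and `j`. Otherwise it is
minus the number of common neighbours, i.e. of walks of length two from `i` to `j`. On the diagonal
this is `-deg i`, which is nonzero because a walk from `i` to any other vertex leaves `i`.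
-/

open SimpleGraph Matrix Finset

namespace SimpleGraph

variable {V : Type*}

section Walks

variable {G : SimpleGraph V}

theorem exists_walk_length_eq_two_iff {i j : V} :
    (∃ p : G.Walk i j, p.length = 2) ↔ (G.commonNeighbors i j).Nonempty := by
  rw [← nonempty_subtype, ← Set.nonempty_coe_sort]
  exact (G.walkLengthTwoEquivCommonNeighbors i j).nonempty_congr

theorem exists_walk_length_le_two_iff {i j : V} (hij : i ≠ j) :
    (∃ p : G.Walk i j, p.length ≤ 2) ↔ G.Adj i j ∨ (G.commonNeighbors i j).Nonempty := by
  rw [← Walk.exists_length_eq_one_iff, ← exists_walk_length_eq_two_iff]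
  constructor
  · rintro ⟨p, hp⟩
    have hp0 : p.length ≠ 0 := fun h => hij (Walk.eq_of_length_eq_zero h)
    obtain hp1 | hp2 : p.length = 1 ∨ p.length = 2 := by omega
    exacts [Or.inl ⟨p, hp1⟩, Or.inr ⟨p, hp2⟩]
  · rintro (⟨p, hp⟩ | ⟨p, hp⟩) <;> exact ⟨p, by omega⟩

end Walks

section Matrices

variable {R : Type*} [Fintype V] (G : SimpleGraph V) [DecidableRel G.Adj]

theorem adjMatrix_mul_self_apply [NonAssocSemiring R] (i j : V) :
    (G.adjMatrix R * G.adjMatrix R) i j = Fintype.card (G.commonNeighbors i j) := by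
  simp only [adjMatrix_mul_apply, adjMatrix_apply, sum_boole]
  rw [← Set.toFinset_card]
  congr 2
  ext k
  simp [mem_commonNeighbors, adj_comm]

theorem adjMatrix_mul_lapMatrix_apply [DecidableEq V] [NonAssocRing R] (i j : V) :
    (G.adjMatrix R * G.lapMatrix R) i j =
      (if G.Adj i j then (G.degree j : R) else 0) - Fintype.card (G.commonNeighbors i j) := by
  rw [lapMatrix, degMatrix, Matrix.mul_sub, Matrix.sub_apply, mul_diagonal,
    adjMatrix_mul_self_apply, adjMatrix_apply, ite_mul, one_mul, zero_mul]

theorem adjMatrix_mul_lapMatrix_apply_ne_zero_iff [DecidableEq V] [NonAssocRing R] [CharZero R]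
    (i j : V) :
    (G.adjMatrix R * G.lapMatrix R) i j ≠ 0 ↔ G.Adj i j ∨ (G.commonNeighbors i j).Nonempty := by
  rw [adjMatrix_mul_lapMatrix_apply]
  by_cases hadj : G.Adj i j
  · have hlt : Fintype.card (G.commonNeighbors i j) < G.degree j := by
      simpa only [commonNeighbors_symm] using hadj.symm.card_commonNeighbors_lt_degree
    rw [if_pos hadj, ← Nat.cast_sub hlt.le, Nat.cast_ne_zero]
    exact iff_of_true (Nat.sub_ne_zero_of_lt hlt) (Or.inl hadj)
  · rw [if_neg hadj, zero_sub, neg_ne_zero, Nat.cast_ne_zero, ← pos_iff_ne_zero,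
      Fintype.card_pos_iff, Set.nonempty_coe_sort]
    exact (or_iff_right hadj).symm

end Matrices

end SimpleGraph

theorem nm_no_zero_iff_diameter_le_two {V : Type*} [Fintype V] [DecidableEq V]
    [Nontrivial V] (G : SimpleGraph V) [DecidableRel G.Adj] :
    (∀ i j : V, (G.adjMatrix ℤ * G.lapMatrix ℤ) i j ≠ 0) ↔
      ∀ i j : V, i ≠ j → ∃ w : G.Walk i j, w.length ≤ 2 := by
  simp only [adjMatrix_mul_lapMatrix_apply_ne_zero_iff]
  constructor
  · intro h i j hij
    exact (exists_walk_length_le_two_iff hij).2 (h i j)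
  · intro h i j
    rcases eq_or_ne i j with rfl | hij
    · obtain ⟨j, hj⟩ := exists_ne i
      obtain ⟨w, -⟩ := h i j hj.symm
      have hadj := w.adj_snd (Walk.not_nil_of_ne hj.symm)
      exact Or.inr ⟨w.snd, hadj, hadj⟩
    · exact (exists_walk_length_le_two_iff hij).1 (h i j hij)
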